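/- The generalized simple roots generate a free abelian subgroup of the group (ℂ(u)^×)^I: if n : I × ℂ → ℤ is finitely supported and ∏_{(i,a)} (A_{i,a})^{n(i,a)} = 1 componentwise in ℂ(u)^×, then n(i,a) = 0 for all (i,a) ∈ I × ℂ. -/

import Mathlib

/-!
Taking divisors turns a multiplicative relation among the `A_{i,a}` into an additive one in the
group ring `ℤ[ℂ]`, with basis `[a]` for `a ∈ ℂ`: for `P_i = ∑_a n(i,a) [a]`, the `j`-th
component of the relation reads `∑_i P_i ([-d_{ij}] - [d_{ij}]) = 0`. The matrix
`([-d_{ij}] - [d_{ij}])` is `[1/2] - [-1/2]` times a matrix of quantum integers, which the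
augmentation `[a] ↦ 1` sends to `-(d_i c_{ij})`. Positive definiteness makes the latter
nonsingular, so the former is nonsingular over the domain `ℤ[ℂ]`, forcing `P = 0`.
-/

open Polynomial

/-- The `j`-th component `(u − a + d_{ij})/(u − a − d_{ij})` of the generalized simple
root `A_{i,a}`, where `d_{ij} = d i * c i j / 2`. -/
noncomputable def genSimpleRoot {I : Type*} (c : I → I → ℤ) (d : I → ℤ)
    (i : I) (a : ℂ) (j : I) : RatFunc ℂ :=
  algebraMap (Polynomial ℂ) (RatFunc ℂ) (X - C (a - ((d i * c i j : ℤ) : ℂ) / 2)) /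
    algebraMap (Polynomial ℂ) (RatFunc ℂ) (X - C (a + ((d i * c i j : ℤ) : ℂ) / 2))

open AddMonoidAlgebra
open scoped Matrix

section Divisor

variable {ι : Type*}

theorem prod_eq_prod_of_prod_div_zpow_eq_one {R F : Type*} [CommRing R] [IsDomain R] [Field F]
    [Algebra R F] [IsFractionRing R F] (s : Finset ι) {N D : ι → R} (hN : ∀ i, N i ≠ 0)
    (hD : ∀ i, D i ≠ 0) (e : ι → ℤ)
    (h : ∏ i ∈ s, (algebraMap R F (N i) / algebraMap R F (D i)) ^ e i = 1) :
    ∏ i ∈ s, N i ^ (e i).toNat * D i ^ (-e i).toNat =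
      ∏ i ∈ s, N i ^ (-e i).toNat * D i ^ (e i).toNat := by
  have hA : ∀ {x : R}, x ≠ 0 → algebraMap R F x ≠ 0 := fun hx =>
    IsFractionRing.to_map_ne_zero_of_mem_nonZeroDivisors (mem_nonZeroDivisors_of_ne_zero hx)
  have hfactor : ∀ i, (algebraMap R F (N i) / algebraMap R F (D i)) ^ e i =
      algebraMap R F (N i ^ (e i).toNat * D i ^ (-e i).toNat) /
        algebraMap R F (N i ^ (-e i).toNat * D i ^ (e i).toNat) := by
    intro i
    rw [← Int.toNat_sub_toNat_neg (e i), zpow_sub₀ (div_ne_zero (hA (hN i)) (hA (hD i))),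
      zpow_natCast, zpow_natCast, Int.toNat_sub_toNat_neg, map_mul, map_mul, map_pow, map_pow,
      map_pow, map_pow, div_pow, div_pow, div_div_div_eq, mul_comm (_ ^ (-e i).toNat)]
  simp_rw [hfactor, Finset.prod_div_distrib, ← map_prod] at h
  refine IsFractionRing.injective R F ((div_eq_one_iff_eq (hA ?_)).1 h)
  exact Finset.prod_ne_zero_iff.2 fun i _ =>
    mul_ne_zero (pow_ne_zero _ (hN i)) (pow_ne_zero _ (hD i))

variable {K : Type*} [Field K]

theorem roots_prod_X_sub_C_pow_mul_X_sub_C_pow (s : Finset ι) (α β : ι → K) (a b : ι → ℕ) :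
    (∏ i ∈ s, (X - C (α i)) ^ a i * (X - C (β i)) ^ b i).roots =
      ∑ i ∈ s, (a i • {α i} + b i • {β i}) := by
  rw [roots_prod _ _ (Finset.prod_ne_zero_iff.2 fun i _ => by simp [X_sub_C_ne_zero])]
  refine congrArg Multiset.sum (Multiset.map_congr rfl fun i _ => ?_)
  rw [roots_mul (by simp [X_sub_C_ne_zero]), roots_pow, roots_pow, roots_X_sub_C, roots_X_sub_C]

theorem sum_zsmul_single_sub_single_eq_zero_of_prod_eq_one (s : Finset ι) (α β : ι → K)
    (e : ι → ℤ) (h : ∏ i ∈ s, (algebraMap K[X] (RatFunc K) (X - C (α i)) /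
      algebraMap K[X] (RatFunc K) (X - C (β i))) ^ e i = 1) :
    ∑ i ∈ s, e i • (single (α i) 1 - single (β i) 1 : ℤ[K]) = 0 := by
  set a : ι → ℕ := fun i => (e i).toNat
  set b : ι → ℕ := fun i => (-e i).toNat
  have hpoly := prod_eq_prod_of_prod_div_zpow_eq_one s (fun i => X_sub_C_ne_zero (α i))
    (fun i => X_sub_C_ne_zero (β i)) e h
  let ψ : Multiset K →+ ℤ[K] :=
    Multiset.sumAddMonoidHom.comp (Multiset.mapAddMonoidHom fun x => single x 1)
  have hψ : ∀ x, ψ {x} = single x 1 := by simp [ψ]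
  have hsum := congrArg (fun p : K[X] => ψ p.roots) hpoly
  simp only [roots_prod_X_sub_C_pow_mul_X_sub_C_pow, map_sum, map_add, map_nsmul, hψ] at hsum
  calc ∑ i ∈ s, e i • (single (α i) 1 - single (β i) 1 : ℤ[K])
      = ∑ i ∈ s, ((a i • single (α i) 1 + b i • single (β i) 1) -
          (b i • single (α i) 1 + a i • single (β i) 1)) := by
        refine Finset.sum_congr rfl fun i _ => ?_
        have hab : e i = a i - b i := (Int.toNat_sub_toNat_neg (e i)).symm
        rw [hab, sub_smul, natCast_zsmul, natCast_zsmul, smul_sub, smul_sub]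
        abel
    _ = 0 := by rw [Finset.sum_sub_distrib, hsum, sub_self]

end Divisor

section GroupAlgebra

variable {G : Type*} [AddCommGroup G]

/-- `q` is the quantum integer `[m]` in the variable `single g 1`. -/
theorem exists_single_zsmul_sub_single_neg_zsmul_eq_mul (g : G) (m : ℤ) :
    ∃ q : ℤ[G], single (m • g) 1 - single (-(m • g)) 1 = (single g 1 - single (-g) 1) * q ∧
      Coalgebra.counit (R := ℤ) q = m := by
  induction m using Int.induction_on with
  | zero => exact ⟨0, by simp, by simp⟩
  | succ m ih =>
    obtain ⟨q, hq, hεq⟩ := ih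
    refine ⟨single g 1 * q + single (-((m : ℤ) • g)) 1, ?_, by simp [hεq]⟩
    rw [mul_add, mul_left_comm, ← hq]
    simp only [mul_sub, sub_mul, single_mul_single, mul_one, add_zsmul, one_zsmul]
    abel_nf
  | pred m ih =>
    obtain ⟨q, hq, hεq⟩ := ih
    refine ⟨single (-g) 1 * q - single ((m : ℤ) • g) 1, ?_, by simp [hεq]⟩
    rw [mul_sub, mul_left_comm, ← hq]
    simp only [mul_sub, sub_mul, single_mul_single, mul_one, sub_zsmul, one_zsmul, neg_smul,
      neg_neg, neg_add_rev]
    abel_nf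

variable {I : Type*}

noncomputable def shiftMatrix (B : Matrix I I ℤ) (g : G) : Matrix I I ℤ[G] :=
  Matrix.of fun i j => single (-(B i j • g)) 1 - single (B i j • g) 1

theorem det_shiftMatrix_ne_zero [Module ℚ G] [Fintype I] [DecidableEq I] {B : Matrix I I ℤ}
    (hB : B.det ≠ 0) {g : G} (hg : g ≠ 0) : (shiftMatrix B g).det ≠ 0 := by
  choose q hq hεq using fun i j => exists_single_zsmul_sub_single_neg_zsmul_eq_mul g (B i j)
  set Q : Matrix I I ℤ[G] := Matrix.of fun i j => -q i j
  have hfactor : (single g 1 - single (-g) 1 : ℤ[G]) ≠ 0 := by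
    have := IsAddTorsionFree.of_module_rat (M := G)
    rwa [sub_ne_zero, Ne, single_left_inj one_ne_zero, self_eq_neg]
  have hsmul : shiftMatrix B g = (single g 1 - single (-g) 1 : ℤ[G]) • Q := by
    ext i j
    simp [shiftMatrix, Q, ← hq]
  have hQ : Q.det ≠ 0 := by
    intro hQ0
    have hcounit : (Bialgebra.counitAlgHom ℤ ℤ[G]).mapMatrix Q = -B := by
      ext i j
      simp [Q, hεq]
    have h0 := congrArg (Bialgebra.counitAlgHom ℤ ℤ[G]) hQ0
    rw [AlgHom.map_det, map_zero, hcounit, Matrix.det_neg] at h0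
    exact hB ((mul_eq_zero.1 h0).resolve_left (by simp))
  rw [hsmul, Matrix.det_smul]
  exact mul_ne_zero (pow_ne_zero _ hfactor) hQ

theorem ofCoeff_mul_eq_sum (f : G →₀ ℤ) (x : ℤ[G]) :
    ofCoeff f * x = f.sum fun a k => single a k * x := by
  conv_lhs => rw [← f.sum_single, ofCoeff_finsuppSum]
  rw [Finsupp.sum_mul]
  rfl

theorem vecMul_shiftMatrix_apply [Fintype I] (v : (I × G) →₀ ℤ) (B : Matrix I I ℤ) (g : G)
    (j : I) :
    ((fun i => ofCoeff (v.curry i)) ᵥ* shiftMatrix B g) j =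
      ∑ p ∈ v.support,
        v p • (single (p.2 - B p.1 j • g) 1 - single (p.2 + B p.1 j • g) 1 : ℤ[G]) := by
  let term : I → G → ℤ → ℤ[G] := fun i a k =>
    k • (single (a - B i j • g) 1 - single (a + B i j • g) 1)
  change _ = v.sum fun p k => term p.1 p.2 k
  rw [← Finsupp.sum_curry_index, Finsupp.sum_fintype _ _ (by simp [term])]
  refine Finset.sum_congr rfl fun i _ => ?_
  simp only [shiftMatrix, Matrix.of_apply]
  rw [ofCoeff_mul_eq_sum]
  refine Finsupp.sum_congr fun a _ => ?_
  simp only [term, mul_sub, single_mul_single, mul_one, smul_sub, AddMonoidAlgebra.smul_single,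
    smul_eq_mul, ← sub_eq_add_neg]

end GroupAlgebra

theorem genSimpleRoot_free_general {I : Type*} [Fintype I] [DecidableEq I]
    (c : I → I → ℤ) (d : I → ℤ)
    (hposdef : (Matrix.of fun i j => ((d i * c i j : ℤ) : ℝ)).PosDef)
    (n : (I × ℂ) →₀ ℤ)
    (h : ∀ j : I, (∏ p ∈ n.support, genSimpleRoot c d p.1 p.2 j ^ n p) = 1) :
    n = 0 := by
  set B : Matrix I I ℤ := Matrix.of fun i j => d i * c i j
  have hB : B.det ≠ 0 :=
    Int.cast_ne_zero.1 ((Int.cast_det (R := ℝ) B).trans_ne hposdef.det_pos.ne')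
  set P : I → ℤ[ℂ] := fun i => ofCoeff (n.curry i)
  have hrel : P ᵥ* shiftMatrix B (1 / 2 : ℂ) = 0 := by
    funext j
    rw [vecMul_shiftMatrix_apply, Pi.zero_apply]
    convert sum_zsmul_single_sub_single_eq_zero_of_prod_eq_one n.support _ _ n (h j) using 5 <;>
      simp only [B, Matrix.of_apply, zsmul_eq_mul, mul_one_div]
  have hP : P = 0 :=
    Matrix.eq_zero_of_vecMul_eq_zero (det_shiftMatrix_ne_zero hB (by norm_num)) hrel
  ext ⟨i, a⟩
  simpa [P] using congrArg (fun f => (f i).coeff a) hP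

/-- The generalized simple roots `A_{i,a}` generate a free abelian subgroup of
`(ℂ(u)^×)^I`: any finitely supported integral relation among them is trivial. -/
theorem genSimpleRoot_free {I : Type*} [Fintype I] [DecidableEq I]
    (c : I → I → ℤ) (d : I → ℤ)
    (hcdiag : ∀ i, c i i = 2)
    (hcoff : ∀ i j, i ≠ j → c i j ≤ 0)
    (hczero : ∀ i j, c i j = 0 ↔ c j i = 0)
    (hd : ∀ i, 0 < d i)
    (hsym : ∀ i j, d i * c i j = d j * c j i)
    (hposdef : (Matrix.of fun i j => ((d i * c i j : ℤ) : ℝ)).PosDef)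
    (n : (I × ℂ) →₀ ℤ)
    (h : ∀ j : I, (∏ p ∈ n.support, genSimpleRoot c d p.1 p.2 j ^ n p) = 1) :
    n = 0 :=
  genSimpleRoot_free_general c d hposdef n h
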